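/- arXiv:1809.06067 — 2 statements merged into one kernel-verified Lean document; each statement's English description precedes it below -/
import Mathlib

section
/- For any t_f > 0 and real s, the value φ(s) = (e^{2s t_f} − 1)/(2s) (with φ(0) = t_f) satisfies φ(s) ≥ t_f when s ≥ 0 and φ(s) ≤ t_f when s ≤ 0; consequently for A symmetric negative semi-definite and B = I, every eigenvalue of G(t_f) is at most t_f, so the minimum energy lower bound satisfies 1/λ_max(G(t_f)) ≥ 1/t_f with equality iff 0 is an eigenvalue of A. -/
/-!
For symmetric `A` the Gram integrand `e^{tA} e^{tAᵀ}` is `e^{2tA}`, so by the functional calculus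
`G(t_f) = φ(A)` with `φ(s) = ∫₀^{t_f} e^{2st} dt`, and the spectrum of `G(t_f)` is `φ(σ(A))`.
Since `e^x ≥ 1 + x`, with equality only at `x = 0`, we have `φ(s) ≥ t_f` for `s ≥ 0` and
`φ(s) < t_f` for `s < 0`. For `σ(A) ⊆ (-∞, 0]` the largest eigenvalue of `G(t_f)` is therefore
at most `t_f`, and equals `t_f` exactly when `0 ∈ σ(A)`.
-/

open Matrix Filter Topology

noncomputable def gram {n m : ℕ} (A : Matrix (Fin n) (Fin n) ℝ) (B : Matrix (Fin n) (Fin m) ℝ)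
    (tf : ℝ) : Matrix (Fin n) (Fin n) ℝ :=
  fun i j => ∫ t in (0:ℝ)..tf,
    (NormedSpace.exp (t • A) * B * Bᵀ * NormedSpace.exp (t • Aᵀ)) i j

noncomputable def phi (tf s : ℝ) : ℝ :=
  if s = 0 then tf else (Real.exp (2 * s * tf) - 1) / (2 * s)

section Phi

variable {tf s : ℝ}

theorem phi_zero (tf : ℝ) : phi tf 0 = tf := if_pos rfl

theorem integral_exp_two_mul_eq_phi (tf c : ℝ) :
    ∫ t in (0:ℝ)..tf, Real.exp (2 * c * t) = phi tf c := by
  rcases eq_or_ne c 0 with rfl | hc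
  · simp [phi_zero]
  · have h2c : 2 * c ≠ 0 := mul_ne_zero two_ne_zero hc
    rw [phi, if_neg hc, intervalIntegral.integral_comp_mul_left (f := Real.exp) h2c, mul_zero,
      integral_exp, Real.exp_zero, smul_eq_mul, ← div_eq_inv_mul]

theorem phi_pos (htf : 0 < tf) (s : ℝ) : 0 < phi tf s := by
  rw [← integral_exp_two_mul_eq_phi]
  exact intervalIntegral.intervalIntegral_pos_of_pos
    (Continuous.intervalIntegrable (by fun_prop) _ _) (fun _ => Real.exp_pos _) htf

theorem self_le_phi (hs : 0 ≤ s) : tf ≤ phi tf s := by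
  rcases hs.eq_or_lt with rfl | hs
  · rw [phi_zero]
  · rw [phi, if_neg hs.ne', le_div_iff₀ (by positivity)]
    linarith [Real.add_one_le_exp (2 * s * tf)]

theorem phi_le_self (hs : s ≤ 0) : phi tf s ≤ tf := by
  rcases hs.eq_or_lt with rfl | hs
  · rw [phi_zero]
  · rw [phi, if_neg hs.ne, div_le_iff_of_neg (by linarith)]
    linarith [Real.add_one_le_exp (2 * s * tf)]

theorem phi_lt_self (htf : tf ≠ 0) (hs : s < 0) : phi tf s < tf := by
  rw [phi, if_neg hs.ne, div_lt_iff_of_neg (by linarith)]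
  linarith [Real.add_one_lt_exp (mul_ne_zero (mul_ne_zero two_ne_zero hs.ne) htf)]

theorem phi_eq_self_iff (htf : tf ≠ 0) (hs : s ≤ 0) : phi tf s = tf ↔ s = 0 := by
  refine ⟨fun h => ?_, fun h => h ▸ phi_zero tf⟩
  by_contra hs0
  exact (phi_lt_self htf (hs.lt_of_ne hs0)).ne h

end Phi

theorem Set.Finite.csSup_eq_iff_mem {α : Type*} [ConditionallyCompleteLinearOrder α] {S : Set α}
    {c : α} (hS : S.Finite) (hne : S.Nonempty) (hc : c ∈ upperBounds S) : sSup S = c ↔ c ∈ S :=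
  ⟨fun h => h ▸ hne.csSup_mem hS, fun h => IsGreatest.csSup_eq ⟨h, hc⟩⟩

theorem Matrix.nonpos_of_mem_spectrum_of_posSemidef_neg {ι : Type*} [Fintype ι] [DecidableEq ι]
    {A : Matrix ι ι ℝ} (hA : (-A).PosSemidef) {x : ℝ} (hx : x ∈ spectrum ℝ A) : x ≤ 0 := by
  have hx' : -x ∈ spectrum ℝ (-A) := by
    rw [← spectrum.neg_eq]
    simpa using hx
  simpa using (posSemidef_iff_isHermitian_and_spectrum_nonneg.mp hA).2 hx'

namespace Matrix.IsHermitian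

variable {ι : Type*} [Fintype ι] [DecidableEq ι] {A : Matrix ι ι ℝ}

theorem exp_smul_eq_cfc (hA : A.IsHermitian) (t : ℝ) :
    NormedSpace.exp (t • A) = cfc (fun x => Real.exp (t * x)) A := by
  set U : Matrix ι ι ℝ := (hA.eigenvectorUnitary : Matrix ι ι ℝ)
  have hUU : star U * U = 1 := Unitary.coe_star_mul_self hA.eigenvectorUnitary
  have hsmul : t • A = U * diagonal (t • hA.eigenvalues) * U⁻¹ := by
    conv_lhs => rw [hA.spectral_theorem]
    rw [inv_eq_left_inv hUU, Unitary.conjStarAlgAut_apply, diagonal_smul, Matrix.mul_smul,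
      Matrix.smul_mul]
    rfl
  rw [hsmul, exp_conj U _ (Unitary.toUnits hA.eigenvectorUnitary).isUnit, exp_diagonal,
    hA.cfc_eq, IsHermitian.cfc, Unitary.conjStarAlgAut_apply, inv_eq_left_inv hUU]
  congr 3
  ext k
  simp [Real.exp_eq_exp_ℝ]

theorem exp_smul_mul_exp_smul_transpose (hA : A.IsHermitian) (t : ℝ) :
    NormedSpace.exp (t • A) * NormedSpace.exp (t • Aᵀ) =
      cfc (fun x => Real.exp (2 * x * t)) A := by
  rw [← conjTranspose_eq_transpose_of_trivial, hA.eq, hA.exp_smul_eq_cfc, ← cfc_mul _ _ A]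
  refine cfc_congr fun x _ => ?_
  rw [← Real.exp_add]
  ring_nf

theorem cfc_apply_eq_sum (hA : A.IsHermitian) (f : ℝ → ℝ) (i j : ι) :
    cfc f A i j = ∑ k, (hA.eigenvectorUnitary : Matrix ι ι ℝ) i k *
      (hA.eigenvectorUnitary : Matrix ι ι ℝ) j k * f (hA.eigenvalues k) := by
  simp only [hA.cfc_eq, IsHermitian.cfc, Unitary.conjStarAlgAut_apply, mul_apply, diagonal_apply,
    mul_ite, mul_zero, Finset.sum_ite_eq', Finset.mem_univ, if_true, star_apply, star_trivial,
    Function.comp_apply, RCLike.ofReal_real_eq_id, id]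
  exact Finset.sum_congr rfl fun k _ => by ring

theorem intervalIntegral_cfc_apply (hA : A.IsHermitian) {a b : ℝ} (f : ℝ → ℝ → ℝ)
    (hf : ∀ x, IntervalIntegrable (fun t => f t x) MeasureTheory.volume a b) (i j : ι) :
    ∫ t in a..b, cfc (f t) A i j = cfc (fun x => ∫ t in a..b, f t x) A i j := by
  simp only [hA.cfc_apply_eq_sum]
  rw [intervalIntegral.integral_finsetSum fun k _ => (hf _).const_mul _]
  simp only [intervalIntegral.integral_const_mul]

theorem spectrum_cfc (hA : A.IsHermitian) (f : ℝ → ℝ) :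
    spectrum ℝ (cfc f A) = f '' spectrum ℝ A :=
  cfc_map_spectrum f A hA.isSelfAdjoint (A.finite_real_spectrum.continuousOn f)

end Matrix.IsHermitian

theorem gram_one_eq_cfc_phi {n : ℕ} {A : Matrix (Fin n) (Fin n) ℝ} (hA : A.IsHermitian)
    (tf : ℝ) : gram A (1 : Matrix (Fin n) (Fin n) ℝ) tf = cfc (phi tf) A := by
  ext i j
  simp only [_root_.gram, transpose_one, mul_one, hA.exp_smul_mul_exp_smul_transpose]
  rw [hA.intervalIntegral_cfc_apply _ fun _ => Continuous.intervalIntegrable (by fun_prop) _ _]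
  simp only [integral_exp_two_mul_eq_phi]

theorem spectrum_gram_one {n : ℕ} {A : Matrix (Fin n) (Fin n) ℝ} (hA : A.IsHermitian) (tf : ℝ) :
    spectrum ℝ (gram A (1 : Matrix (Fin n) (Fin n) ℝ) tf) = phi tf '' spectrum ℝ A := by
  rw [gram_one_eq_cfc_phi hA, hA.spectrum_cfc]

theorem nsd_lower_bound {n : ℕ} [NeZero n] (tf : ℝ) (htf : 0 < tf)
    (A : Matrix (Fin n) (Fin n) ℝ) (hA : A.IsHermitian) (hnsd : (-A).PosSemidef) :
    (∀ s : ℝ, 0 ≤ s → tf ≤ phi tf s) ∧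
      (∀ s : ℝ, s ≤ 0 → phi tf s ≤ tf) ∧
      (∀ μ ∈ spectrum ℝ (gram A (1 : Matrix (Fin n) (Fin n) ℝ) tf), μ ≤ tf) ∧
      1 / tf ≤ 1 / sSup (spectrum ℝ (gram A (1 : Matrix (Fin n) (Fin n) ℝ) tf)) ∧
      (1 / sSup (spectrum ℝ (gram A (1 : Matrix (Fin n) (Fin n) ℝ) tf)) = 1 / tf ↔
        (0:ℝ) ∈ spectrum ℝ A) := by
  have hA_nonpos : ∀ s ∈ spectrum ℝ A, s ≤ 0 := fun s =>
    nonpos_of_mem_spectrum_of_posSemidef_neg hnsd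
  have hA_ne : (spectrum ℝ A).Nonempty := by
    rw [hA.spectrum_real_eq_range_eigenvalues]
    exact Set.range_nonempty _
  set S := spectrum ℝ (gram A (1 : Matrix (Fin n) (Fin n) ℝ) tf)
  have hS : S = phi tf '' spectrum ℝ A := spectrum_gram_one hA tf
  have hS_le : tf ∈ upperBounds S := by
    rw [hS]
    rintro _ ⟨s, hs, rfl⟩
    exact phi_le_self (hA_nonpos s hs)
  have hS_ne : S.Nonempty := hS ▸ hA_ne.image _
  have hS_fin : S.Finite := hS ▸ A.finite_real_spectrum.image _
  have hsup_pos : 0 < sSup S := by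
    obtain ⟨s, -, hs⟩ : sSup S ∈ phi tf '' spectrum ℝ A := hS ▸ hS_ne.csSup_mem hS_fin
    exact hs ▸ phi_pos htf s
  have htf_mem : tf ∈ S ↔ (0:ℝ) ∈ spectrum ℝ A := by
    rw [hS]
    refine ⟨fun ⟨s, hs, h⟩ => ?_, fun h => ⟨0, h, phi_zero tf⟩⟩
    rwa [← (phi_eq_self_iff htf.ne' (hA_nonpos s hs)).mp h]
  refine ⟨fun s => self_le_phi, fun s => phi_le_self, hS_le,
    one_div_le_one_div_of_le hsup_pos (csSup_le hS_ne hS_le), ?_⟩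
  rw [one_div, one_div, _root_.inv_inj, hS_fin.csSup_eq_iff_mem hS_ne hS_le, htf_mem]
end

section
/- For any n×n real symmetric positive definite matrix M with n ≥ 2, the smallest eigenvalue satisfies λ_min(M) ≥ 1/√(α'/n + √((n−1)/n · (β' − α'²/n))), where α' = trace(M⁻²) and β' = trace(M⁻⁴). -/
/-!
If `λᵢ` are the eigenvalues of `M`, the numbers `xᵢ = λᵢ⁻²` satisfy `∑ xᵢ = α'` and
`∑ xᵢ² = β'`. Samuelson's inequality bounds every member of a finite family of reals by its mean
plus `√((n - 1) / n)` times its standard deviation, i.e. `xᵢ ≤ α'/n + √((n-1)/n · (β' - α'²/n))`.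
Inverting gives the lower bound for every eigenvalue, in particular for the smallest one.
-/

open Matrix Finset

section Samuelson

variable {ι : Type*} [Fintype ι]

theorem card_mul_sq_le_of_sum_eq_zero {y : ι → ℝ} (hy : ∑ i, y i = 0) (k : ι) :
    Fintype.card ι * y k ^ 2 ≤ (Fintype.card ι - 1) * ∑ i, y i ^ 2 := by
  classical
  -- `y k = -∑_{i ≠ k} y i`, and Cauchy–Schwarz applies to the remaining `card ι - 1` terms.
  have hcs := sq_sum_le_card_mul_sum_sq (s := univ.erase k) (f := y)
  rw [card_erase_of_mem (mem_univ k), card_univ, Nat.cast_pred (Fintype.card_pos_iff.2 ⟨k⟩)]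
    at hcs
  rw [← add_sum_erase _ _ (mem_univ k)] at hy ⊢
  rw [show ∑ i ∈ univ.erase k, y i = -y k by linarith, neg_sq] at hcs
  nlinarith

theorem sum_sub_mean_sq (x : ι → ℝ) :
    ∑ i, (x i - (∑ j, x j) / Fintype.card ι) ^ 2 =
      ∑ i, x i ^ 2 - (∑ i, x i) ^ 2 / Fintype.card ι := by
  rcases isEmpty_or_nonempty ι with hι | hι
  · simp
  have hn : (Fintype.card ι : ℝ) ≠ 0 := Nat.cast_ne_zero.2 Fintype.card_ne_zero
  simp only [sub_sq, sum_add_distrib, sum_sub_distrib, ← sum_mul, ← mul_sum, sum_const,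
    card_univ, nsmul_eq_mul]
  field_simp
  ring

theorem samuelson_inequality (x : ι → ℝ) (k : ι) :
    x k ≤ (∑ i, x i) / Fintype.card ι + √((Fintype.card ι - 1) / Fintype.card ι *
      (∑ i, x i ^ 2 - (∑ i, x i) ^ 2 / Fintype.card ι)) := by
  set m := (∑ i, x i) / Fintype.card ι
  have hn : (0 : ℝ) < Fintype.card ι := Nat.cast_pos.2 (Fintype.card_pos_iff.2 ⟨k⟩)
  have hcentered : ∑ i, (x i - m) = 0 := by
    rw [sum_sub_distrib, sum_const, card_univ, nsmul_eq_mul]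
    simp [m, mul_div_cancel₀ _ hn.ne']
  have hk := card_mul_sq_le_of_sum_eq_zero hcentered k
  rw [sum_sub_mean_sq] at hk
  have hsq : (x k - m) ^ 2 ≤ (Fintype.card ι - 1) / Fintype.card ι *
      (∑ i, x i ^ 2 - (∑ i, x i) ^ 2 / Fintype.card ι) := by
    rw [div_mul_eq_mul_div, le_div_iff₀ hn]
    linarith
  linarith [le_abs_self (x k - m), Real.abs_le_sqrt hsq]

end Samuelson

namespace Matrix

variable {n : Type*} [Fintype n] [DecidableEq n]

section RCLike

open scoped ComplexOrder

variable {𝕜 : Type*} [RCLike 𝕜] {A : Matrix n n 𝕜}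

theorem IsHermitian.trace_cfc (hA : A.IsHermitian) (f : ℝ → ℝ) :
    (cfc f A).trace = ∑ i, (f (hA.eigenvalues i) : 𝕜) := by
  rw [hA.cfc_eq, IsHermitian.cfc, Unitary.conjStarAlgAut_apply, trace_mul_cycle]
  simp [trace_diagonal]

theorem IsHermitian.inv_pow_eq_cfc (hA : A.IsHermitian) (hA' : IsUnit A) (k : ℕ) :
    A⁻¹ ^ k = cfc (fun x : ℝ ↦ x⁻¹ ^ k) A := by
  rw [cfc_pow (fun x : ℝ ↦ x⁻¹) k A (finite_real_spectrum.continuousOn _),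
    nonsing_inv_eq_ringInverse]
  exact congr($((cfc_ringInverse_id (R := ℝ) A hA').symm) ^ k)

theorem PosDef.trace_inv_pow (hA : A.PosDef) (k : ℕ) :
    (A⁻¹ ^ k).trace = ∑ i, ((hA.1.eigenvalues i)⁻¹ ^ k : ℝ) := by
  rw [hA.1.inv_pow_eq_cfc hA.isUnit, hA.1.trace_cfc]
  push_cast
  rfl

end RCLike

theorem PosDef.one_div_sqrt_le_of_mem_spectrum {M : Matrix n n ℝ} (hM : M.PosDef) {μ : ℝ}
    (hμ : μ ∈ spectrum ℝ M) :
    1 / √((M⁻¹ ^ 2).trace / Fintype.card n + √((Fintype.card n - 1) / Fintype.card n *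
      ((M⁻¹ ^ 4).trace - (M⁻¹ ^ 2).trace ^ 2 / Fintype.card n))) ≤ μ := by
  obtain ⟨k, rfl⟩ := hM.1.spectrum_real_eq_range_eigenvalues ▸ hμ
  have hk := hM.eigenvalues_pos k
  have hsamuelson := samuelson_inequality (fun i ↦ (hM.1.eigenvalues i)⁻¹ ^ 2) k
  simp only [← pow_mul] at hsamuelson
  rw [hM.trace_inv_pow 2, hM.trace_inv_pow 4]
  calc 1 / √_ ≤ 1 / √((hM.1.eigenvalues k)⁻¹ ^ 2) :=
        one_div_le_one_div_of_le (by positivity) (Real.sqrt_le_sqrt hsamuelson)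
    _ = hM.1.eigenvalues k := by rw [Real.sqrt_sq (by positivity), one_div, inv_inv]

end Matrix

theorem eig_min_lower_estimate {n : ℕ} (hn : 2 ≤ n) (M : Matrix (Fin n) (Fin n) ℝ)
    (hM : M.PosDef) :
    1 / Real.sqrt ((M⁻¹ ^ 2).trace / n +
        Real.sqrt (((n : ℝ) - 1) / n * ((M⁻¹ ^ 4).trace - (M⁻¹ ^ 2).trace ^ 2 / n))) ≤
      sInf (spectrum ℝ M) := by
  have : Nonempty (Fin n) := ⟨⟨0, by omega⟩⟩
  refine le_csInf ?_ fun μ hμ ↦ ?_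
  · exact hM.1.spectrum_real_eq_range_eigenvalues ▸ Set.range_nonempty _
  · simpa using hM.one_div_sqrt_le_of_mem_spectrum hμ
end
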